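/- If Λ and Ω are connected graphs, then the restricted wreath product graph Ω ≀ Λ is connected. -/

import Mathlib

/-!
Every vertex `(f, v)` is joined to `(const ω, v)`: walk (in `Λ`) to a site where `f` differs
from `ω`, walk its lamp state (in `Ω`) back to `ω`, and repeat; this terminates because `f` is
finitely supported. Two vertices `(const ω, v)` and `(const ω, w)` are joined by walking from
`v` to `w` in `Λ`.
-/

open SimpleGraph

/-- Restricted wreath product of graphs: `Ω` (states, base `ω`) by `Λ` (lamps). -/
def GraphWreath {W V : Type*} (Ω : SimpleGraph W) (ω : W) (Λ : SimpleGraph V) :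
    SimpleGraph ({f : V → W // {u | f u ≠ ω}.Finite} × V) where
  Adj x y :=
    (x.2 = y.2 ∧ (∀ u, u ≠ x.2 → x.1.1 u = y.1.1 u) ∧ Ω.Adj (x.1.1 x.2) (y.1.1 x.2))
    ∨ (x.1 = y.1 ∧ Λ.Adj x.2 y.2)
  symm := by
    constructor
    rintro ⟨f, v⟩ ⟨g, w⟩ (⟨h1, h2, h3⟩ | ⟨h1, h2⟩)
    · cases h1
      exact Or.inl ⟨rfl, fun u hu => (h2 u hu).symm, h3.symm⟩
    · exact Or.inr ⟨h1.symm, h2.symm⟩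
  loopless := by
    constructor
    rintro ⟨f, v⟩ (⟨_, _, h⟩ | ⟨_, h⟩)
    · exact Ω.irrefl h
    · exact Λ.irrefl h

namespace GraphWreath

abbrev Config (V : Type*) {W : Type*} (ω : W) := {f : V → W // {u | f u ≠ ω}.Finite}

namespace Config

variable {V W : Type*} {ω : W}

def const (V : Type*) (ω : W) : Config V ω := ⟨fun _ => ω, by simp⟩

open Classical in
noncomputable def update (f : Config V ω) (v : V) (c : W) : Config V ω :=
  ⟨Function.update f.1 v c, (f.2.insert v).subset fun u hu => by
    by_cases huv : u = v
    · exact Or.inl huv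
    · exact Or.inr (by simpa [Function.update_of_ne huv] using hu)⟩

@[simp]
lemma update_apply_self (f : Config V ω) (v : V) : f.update v (f.1 v) = f :=
  Subtype.ext <| by classical exact Function.update_eq_self v f.1

lemma eq_const_of_forall_eq (f : Config V ω) (h : ∀ u, f.1 u = ω) : f = const V ω :=
  Subtype.ext (funext h)

end Config

variable {W V : Type*} (Ω : SimpleGraph W) (ω : W) (Λ : SimpleGraph V)

def positionHom (f : Config V ω) : Λ →g GraphWreath Ω ω Λ where
  toFun v := (f, v)
  map_rel' h := Or.inr ⟨rfl, h⟩

@[simps]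
noncomputable def lampHom (f : Config V ω) (v : V) : Ω →g GraphWreath Ω ω Λ where
  toFun c := (f.update v c, v)
  map_rel' h :=
    Or.inl ⟨rfl, fun u hu => by simp [Config.update, hu], by simpa [Config.update] using h⟩

variable {Ω ω Λ}

lemma reachable_of_reachable_position (f : Config V ω) {v w : V} (h : Λ.Reachable v w) :
    (GraphWreath Ω ω Λ).Reachable (f, v) (f, w) :=
  h.map (positionHom Ω ω Λ f)

lemma reachable_update (f : Config V ω) (v : V) {c : W} (h : Ω.Reachable (f.1 v) c) :
    (GraphWreath Ω ω Λ).Reachable (f, v) (f.update v c, v) := by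
  simpa using h.map (lampHom Ω ω Λ f v)

lemma reachable_const_of_support_subset (hΩ : Ω.Preconnected) (hΛ : Λ.Preconnected)
    (s : Finset V) :
    ∀ f : Config V ω, {u | f.1 u ≠ ω} ⊆ s → ∀ v,
      (GraphWreath Ω ω Λ).Reachable (f, v) (Config.const V ω, v) := by
  classical
  induction s using Finset.induction with
  | empty =>
    intro f hf v
    rw [f.eq_const_of_forall_eq fun u => by simpa using @hf u]
  | @insert a s _ ih =>
    intro f hf v
    have hsupp : {u | (f.update a ω).1 u ≠ ω} ⊆ s := by
      intro u hu
      have hua : u ≠ a := by rintro rfl; simp [Config.update] at hu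
      have hfu : f.1 u ≠ ω := by simpa [Config.update, Function.update_of_ne hua] using hu
      simpa [hua] using hf hfu
    exact (reachable_of_reachable_position f (hΛ v a)).trans <|
      (reachable_update f a (hΩ _ _)).trans <|
      (ih _ hsupp a).trans (reachable_of_reachable_position _ (hΛ a v))

lemma reachable_const (hΩ : Ω.Preconnected) (hΛ : Λ.Preconnected) (f : Config V ω) (v : V) :
    (GraphWreath Ω ω Λ).Reachable (f, v) (Config.const V ω, v) :=
  reachable_const_of_support_subset hΩ hΛ f.2.toFinset f (by simp) v

end GraphWreath

/-- the restricted wreath product of connected graphs is connected. -/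
theorem stmt_2 {W V : Type*} (Ω : SimpleGraph W) (ω : W) (Λ : SimpleGraph V)
    (hΩ : Ω.Connected) (hΛ : Λ.Connected) :
    (GraphWreath Ω ω Λ).Connected := by
  obtain ⟨v₀⟩ := hΛ.nonempty
  refine (connected_iff _).mpr ⟨fun ⟨f, v⟩ ⟨g, w⟩ => ?_, ⟨(GraphWreath.Config.const V ω, v₀)⟩⟩
  exact (GraphWreath.reachable_const hΩ.preconnected hΛ.preconnected f v).trans <|
    (GraphWreath.reachable_of_reachable_position _ (hΛ.preconnected v w)).trans
      (GraphWreath.reachable_const hΩ.preconnected hΛ.preconnected g w).symm
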